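/- A monotone consistent scheme is L¹-contractive (Crandall–Tartar): if H : ℝ³ → ℝ is nondecreasing in each argument and conserves sums in the sense that Σ_j H(S_{j−1},S_j,S_{j+1}) = Σ_j S_j for all finitely supported states (periodic or with fixed boundaries), then for two states S, T on a periodic grid, Σ_j |H(S)_j − H(T)_j| ≤ Σ_j |S_j − T_j|. Prove the abstract Crandall–Tartar lemma: a monotone, sum-preserving map on ℝ^N satisfies Σ|Φ(x)_i − Φ(y)_i| ≤ Σ|x_i − y_i|. -/

import Mathlib

/-!
Writing `|a - b| = (a ⊔ b - a) + (a ⊔ b - b)`, monotonicity gives `Φ x ⊔ Φ y ≤ Φ (x ⊔ y)`, so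
`∑ |Φ x - Φ y|` is at most `∑ ((Φ (x ⊔ y) - Φ x) + (Φ (x ⊔ y) - Φ y))`; by sum preservation this
equals `∑ ((x ⊔ y - x) + (x ⊔ y - y)) = ∑ |x - y|`.
-/

open Finset

section LinearOrderedAddCommGroup

variable {α : Type*} [AddCommGroup α] [LinearOrder α] [IsOrderedAddMonoid α]

theorem abs_sub_eq_sup_sub_add_sup_sub (a b : α) : |a - b| = (a ⊔ b - a) + (a ⊔ b - b) := by
  rcases le_total a b with h | h
  · rw [sup_eq_right.2 h, sub_self, add_zero, abs_sub_comm, abs_of_nonneg (sub_nonneg.2 h)]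
  · rw [sup_eq_left.2 h, sub_self, zero_add, abs_of_nonneg (sub_nonneg.2 h)]

theorem abs_sub_le_sub_add_sub_of_le {a b c : α} (ha : a ≤ c) (hb : b ≤ c) :
    |a - b| ≤ (c - a) + (c - b) :=
  calc |a - b| = (a ⊔ b - a) + (a ⊔ b - b) := abs_sub_eq_sup_sub_add_sup_sub a b
    _ ≤ (c - a) + (c - b) := by gcongr <;> exact sup_le ha hb

theorem sum_abs_sub_le_of_monotone_of_sum_eq {ι : Type*} [Fintype ι]
    {Φ : (ι → α) → ι → α} (hmono : Monotone Φ) (hsum : ∀ x, ∑ i, Φ x i = ∑ i, x i)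
    (x y : ι → α) : ∑ i, |Φ x i - Φ y i| ≤ ∑ i, |x i - y i| :=
  calc ∑ i, |Φ x i - Φ y i|
      ≤ ∑ i, ((Φ (x ⊔ y) i - Φ x i) + (Φ (x ⊔ y) i - Φ y i)) :=
        sum_le_sum fun i _ => abs_sub_le_sub_add_sub_of_le
          (hmono le_sup_left i) (hmono le_sup_right i)
    _ = ∑ i, (((x ⊔ y) i - x i) + ((x ⊔ y) i - y i)) := by
        simp only [sum_add_distrib, sum_sub_distrib, hsum]
    _ = ∑ i, |x i - y i| := by simp only [Pi.sup_apply, abs_sub_eq_sup_sub_add_sup_sub]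

end LinearOrderedAddCommGroup

/-- Crandall–Tartar lemma: a monotone, sum-preserving map on `ℝ^N` is an
`L¹` contraction. -/
theorem crandall_tartar (N : ℕ) (Φ : (Fin N → ℝ) → (Fin N → ℝ))
    (hmono : ∀ x y : Fin N → ℝ, (∀ i, x i ≤ y i) → ∀ i, Φ x i ≤ Φ y i)
    (hsum : ∀ x : Fin N → ℝ, ∑ i, Φ x i = ∑ i, x i) :
    ∀ x y : Fin N → ℝ, ∑ i, |Φ x i - Φ y i| ≤ ∑ i, |x i - y i| :=
  sum_abs_sub_le_of_monotone_of_sum_eq (fun _ _ hxy => hmono _ _ hxy) hsum
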